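/- arXiv:2410.04857 — 10 statements merged into one kernel-verified Lean document; each statement's English description precedes it below -/
import Mathlib

section
/- For a prime p, integers j ≥ 1 and m with 1 ≤ m ≤ p, the p-adic valuation of the multinomial coefficient (m(p^j−1))! / ((p^j−1)!)^m equals (m−1)j. -/
/-!
By Legendre's formula the valuation is `∑ᵢ (⌊m n / pⁱ⌋ - m ⌊n / pⁱ⌋)` with `n = p^j - 1`.
For `1 ≤ i ≤ j`, since `m ≤ p ≤ pⁱ` the floors are
`⌊m (p^j - 1) / pⁱ⌋ = m p^(j-i) - 1` and `⌊(p^j - 1) / pⁱ⌋ = p^(j-i) - 1`,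
so each of the `j` summands equals `m - 1`.
-/

open Nat Finset

theorem Nat.factorial_pow_dvd_factorial_mul (m n : ℕ) : n ! ^ m ∣ (m * n)! := by
  induction m with
  | zero => simp
  | succ m ih =>
    rw [pow_succ, succ_mul]
    exact (Nat.mul_dvd_mul_right ih _).trans (Nat.factorial_mul_factorial_dvd_factorial_add _ _)

theorem padicValNat_factorial_mul_div_factorial_pow {p m n b : ℕ} [Fact p.Prime]
    (hn : log p n < b) (hmn : log p (m * n) < b) :
    padicValNat p ((m * n)! / n ! ^ m) = ∑ i ∈ Ico 1 b, (m * n / p ^ i - m * (n / p ^ i)) := by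
  rw [padicValNat.div_of_dvd (Nat.factorial_pow_dvd_factorial_mul m n), padicValNat.pow,
    padicValNat_factorial hn, padicValNat_factorial hmn, mul_sum, ← sum_tsub_distrib]
  intro i _
  exact Nat.mul_div_le_mul_div_assoc m n (p ^ i)

theorem Nat.mul_mul_sub_one_div {m a b : ℕ} (hmb : m ≤ b) :
    m * (a * b - 1) / b = m * a - 1 := by
  rcases Nat.eq_zero_or_pos (m * a) with hma | hma
  · rcases Nat.mul_eq_zero.mp hma with rfl | rfl <;> simp
  · have hm : 0 < m := Nat.pos_of_mul_pos_right hma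
    have hab : 1 ≤ a * b := Nat.mul_pos (Nat.pos_of_mul_pos_left hma) (by omega)
    have key : m * (a * b - 1) = b * (m * a - 1) + (b - m) := by
      zify [hab, hma, hmb]
      ring
    rw [key, Nat.mul_add_div (by omega), Nat.div_eq_of_lt (by omega), add_zero]

theorem Nat.mul_mul_sub_one_div_sub_mul_div {m a b : ℕ} (ha : 0 < a) (hb : 0 < b) (hmb : m ≤ b) :
    m * (a * b - 1) / b - m * ((a * b - 1) / b) = m - 1 := by
  have h1 : (a * b - 1) / b = a - 1 := by simpa using Nat.mul_mul_sub_one_div (m := 1) (a := a) hb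
  rw [Nat.mul_mul_sub_one_div hmb, h1, Nat.mul_sub_one]
  have : m ≤ m * a := Nat.le_mul_of_pos_right m ha
  omega

theorem stmt0_general (p j m : ℕ) (hp : p.Prime) (hm2 : m ≤ p) :
    padicValNat p ((m * (p ^ j - 1)).factorial / ((p ^ j - 1).factorial) ^ m)
      = (m - 1) * j := by
  have := Fact.mk hp
  have hpj : p ^ j - 1 < p ^ j := Nat.sub_lt (pow_pos hp.pos j) one_pos
  have hlog : log p (p ^ j - 1) < j + 1 :=
    log_lt_of_lt_pow' j.succ_ne_zero (hpj.trans (Nat.pow_lt_pow_right hp.one_lt j.lt_succ_self))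
  have hlog' : log p (m * (p ^ j - 1)) < j + 1 := by
    refine log_lt_of_lt_pow' j.succ_ne_zero ?_
    calc m * (p ^ j - 1) < p * p ^ j := Nat.mul_lt_mul_of_le_of_lt hm2 hpj hp.pos
      _ = p ^ (j + 1) := (pow_succ' p j).symm
  have hsummand : ∀ i ∈ Ico 1 (j + 1),
      m * (p ^ j - 1) / p ^ i - m * ((p ^ j - 1) / p ^ i) = m - 1 := by
    intro i hi
    obtain ⟨hi1, hij⟩ := mem_Ico.mp hi
    rw [← pow_sub_mul_pow p (Nat.le_of_lt_succ hij)]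
    exact Nat.mul_mul_sub_one_div_sub_mul_div (pow_pos hp.pos _) (pow_pos hp.pos _)
      (hm2.trans (Nat.le_self_pow (by omega) p))
  rw [padicValNat_factorial_mul_div_factorial_pow hlog hlog', sum_congr rfl hsummand, sum_const,
    Nat.card_Ico, smul_eq_mul, Nat.add_sub_cancel, mul_comm]

/-- For a prime `p`, integers `j ≥ 1` and `1 ≤ m ≤ p`, the `p`-adic valuation of the
multinomial coefficient `(m(p^j−1))! / ((p^j−1)!)^m` equals `(m−1)·j`. -/
theorem stmt0 (p j m : ℕ) (hp : p.Prime) (hj : 1 ≤ j) (hm1 : 1 ≤ m) (hm2 : m ≤ p) :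
    padicValNat p ((m * (p ^ j - 1)).factorial / ((p ^ j - 1).factorial) ^ m)
      = (m - 1) * j :=
  stmt0_general p j m hp hm2
end

section
/- For a prime p, integers j ≥ 1 and m with 1 ≤ m ≤ p^j − 1, the p-adic valuation of the multinomial coefficient (m(p^j−1))!/((p^j−1)!)^m equals (m−1)j. -/
/-!
Write `n = p ^ j - 1`. By Legendre's formula `(p - 1) v_p(N!) = N - s_p(N)`, where `s_p` is the
base-`p` digit sum, so `(p - 1) v_p((mn)! / (n!)^m) = m s_p(n) - s_p(mn)`. In base `p`, the digits
of `a` and of `p ^ j - 1 - a` add up to `p - 1` in each of the `j` positions, so `s_p(n) = j(p - 1)`;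
and `mn = (p ^ j - m) + p ^ j (m - 1)` gives `s_p(mn) = s_p(p ^ j - m) + s_p(m - 1) = j(p - 1)`
as well, since `m - 1 < p ^ j` and `p ^ j - m = p ^ j - 1 - (m - 1)`.
-/

open Nat

namespace Nat

theorem digits_sum_of_lt {b r : ℕ} (hr : r < b) : (b.digits r).sum = r := by
  rcases eq_or_ne r 0 with rfl | hr0
  · simp
  · simp [digits_of_lt b r hr0 hr]

theorem digits_sum_add_base_pow_mul {b j a : ℕ} (hb : 1 < b) (ha : a < b ^ j) (c : ℕ) :
    (b.digits (a + b ^ j * c)).sum = (b.digits a).sum + (b.digits c).sum := by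
  rcases eq_or_ne c 0 with rfl | hc
  · simp
  obtain ⟨k, hk⟩ := Nat.exists_eq_add_of_le ((digits_length_le_iff hb a).2 ha)
  rw [hk, ← digits_append_zeroes_append_digits hb (Nat.pos_of_ne_zero hc)]
  simp

theorem digits_sum_add_digits_sum_sub {b : ℕ} (hb : 1 < b) :
    ∀ j a, a < b ^ j → (b.digits a).sum + (b.digits (b ^ j - 1 - a)).sum = j * (b - 1)
  | 0, a, ha => by simp_all
  | j + 1, a, ha => by
    have hr : a % b < b := mod_lt a (by omega)
    have hq : a / b < b ^ j := Nat.div_lt_of_lt_mul (by rwa [mul_comm, ← pow_succ])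
    have hcompl : b ^ (j + 1) - 1 - a = (b - 1 - a % b) + b ^ 1 * (b ^ j - 1 - a / b) := by
      have hsplit : b * (b ^ j - 1 - a / b) + b * (a / b) + b = b * b ^ j := by
        rw [← Nat.mul_add, ← Nat.mul_add_one]; congr 1; omega
      have := Nat.div_add_mod a b
      rw [pow_succ, pow_one, mul_comm (b ^ j)]
      omega
    have hdecomp : a = a % b + b ^ 1 * (a / b) := by rw [pow_one, Nat.mod_add_div]
    rw [hcompl]
    nth_rw 1 [hdecomp]
    rw [digits_sum_add_base_pow_mul hb (by rwa [pow_one]),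
      digits_sum_add_base_pow_mul hb (by rw [pow_one]; omega), digits_sum_of_lt hr,
      digits_sum_of_lt (by omega : b - 1 - a % b < b), add_one_mul]
    have := digits_sum_add_digits_sum_sub hb j (a / b) hq
    omega

theorem factorial_pow_dvd_factorial_mul_s2 (m n : ℕ) : n ! ^ m ∣ (m * n)! := by
  simpa using prod_factorial_dvd_factorial_sum (Finset.range m) fun _ ↦ n

end Nat

theorem sub_one_mul_padicValNat_factorial_mul_div_factorial_pow {p : ℕ} [Fact p.Prime]
    (m n : ℕ) :
    (p - 1) * padicValNat p ((m * n)! / n ! ^ m) =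
      m * (p.digits n).sum - (p.digits (m * n)).sum := by
  rw [padicValNat.div_of_dvd (factorial_pow_dvd_factorial_mul_s2 m n), padicValNat.pow,
    Nat.mul_sub, mul_left_comm, sub_one_mul_padicValNat_factorial,
    sub_one_mul_padicValNat_factorial, Nat.mul_sub]
  have := digit_sum_le p (m * n)
  have := Nat.mul_le_mul_left m (digit_sum_le p n)
  omega

theorem stmt2_general (p j m : ℕ) (hp : p.Prime) (hm1 : 1 ≤ m) (hm2 : m ≤ p ^ j - 1) :
    padicValNat p ((m * (p ^ j - 1)).factorial / ((p ^ j - 1).factorial) ^ m)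
      = (m - 1) * j := by
  have : Fact p.Prime := ⟨hp⟩
  have hp1 : 1 < p := hp.one_lt
  have hsn : (p.digits (p ^ j - 1)).sum = j * (p - 1) := by
    simpa using digits_sum_add_digits_sum_sub hp1 j 0 (by positivity)
  have hsmn : (p.digits (m * (p ^ j - 1))).sum = j * (p - 1) := by
    have hsplit : m * (p ^ j - 1) = (p ^ j - 1 - (m - 1)) + p ^ j * (m - 1) := by
      have : m * (p ^ j - 1) + m = p ^ j * (m - 1) + p ^ j := by
        rw [← Nat.mul_add_one, Nat.sub_add_cancel (by omega), ← Nat.mul_add_one,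
          Nat.sub_add_cancel hm1, mul_comm]
      omega
    rw [hsplit, digits_sum_add_base_pow_mul hp1 (by omega), add_comm]
    exact digits_sum_add_digits_sum_sub hp1 j (m - 1) (by omega)
  apply Nat.eq_of_mul_eq_mul_left (show 0 < p - 1 by omega)
  rw [sub_one_mul_padicValNat_factorial_mul_div_factorial_pow, hsn, hsmn, mul_comm (p - 1),
    mul_assoc, Nat.sub_one_mul]

/-- For a prime `p`, integers `j ≥ 1` and `1 ≤ m ≤ p^j − 1`, the `p`-adic valuation of the
multinomial coefficient `(m(p^j−1))!/((p^j−1)!)^m` equals `(m−1)·j`. -/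
theorem stmt2 (p j m : ℕ) (hp : p.Prime) (hj : 1 ≤ j) (hm1 : 1 ≤ m) (hm2 : m ≤ p ^ j - 1) :
    padicValNat p ((m * (p ^ j - 1)).factorial / ((p ^ j - 1).factorial) ^ m)
      = (m - 1) * j :=
  stmt2_general p j m hp hm1 hm2
end

section
/- Let p be a prime, m ≤ p, and write m = p^ν·M with p ∤ M and M having base-p digits [m_θ,...,m_1,m_0] with m_θ ≥ 1 and θ < j. Then the base-p expansion of M(p^j − 1) is [m_θ,...,m_1,(m_0−1),(p−1),...,(p−1),(p−m_θ−1),...,(p−m_1−1),(p−m_0)], where (p−1) is repeated j−θ−1 times. -/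
/-!
Let `d = M mod p ≥ 1` be the lowest digit of `M` and `θ + 1 ≤ j` its number of digits. Then
`M(p^j − 1) = (M − 1)·p^j + (p^j − M)`, where `M − 1` has the digits of `M` with `d` lowered
to `d − 1`, and `p^j − M` is the `p`-adic complement of `M` (digits `p − d`, then `p − 1 − m_i`)
padded by `j − θ − 1` digits `p − 1`. As `p^j − M < p^j`, the two digit strings concatenate.
-/

namespace Nat

theorem ofDigits_replicate_pred_add_one {b : ℕ} (hb : 1 ≤ b) (k : ℕ) :
    ofDigits b (List.replicate k (b - 1)) + 1 = b ^ k := by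
  induction k with
  | zero => rfl
  | succ k ih =>
    rw [List.replicate_succ, ofDigits_cons, pow_succ', ← ih]
    zify [hb]
    ring

theorem ofDigits_map_complement_add_add_one {b : ℕ} {l : List ℕ} (hl : ∀ x ∈ l, x < b) :
    ofDigits b (l.map fun x => b - x - 1) + ofDigits b l + 1 = b ^ l.length := by
  induction l with
  | nil => rfl
  | cons x l ih =>
    have hx : x < b := hl x List.mem_cons_self
    rw [List.map_cons, ofDigits_cons, ofDigits_cons, List.length_cons, pow_succ',
      ← ih fun y hy => hl y (List.mem_cons_of_mem x hy)]
    have hx' : 1 ≤ b - x := by omega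
    zify [hx.le, hx']
    ring

theorem ofDigits_complement_add {b d : ℕ} {t : List ℕ} (hdb : d ≤ b)
    (ht : ∀ x ∈ t, x < b) :
    ofDigits b ((b - d) :: t.map fun x => b - x - 1) + ofDigits b (d :: t) =
      b ^ (t.length + 1) := by
  rw [ofDigits_cons, ofDigits_cons, pow_succ', ← ofDigits_map_complement_add_add_one ht]
  zify [hdb]
  ring

theorem ofDigits_mul_pow_sub_one {b d j : ℕ} {t : List ℕ} (hd : 1 ≤ d) (hdb : d ≤ b)
    (ht : ∀ x ∈ t, x < b) (hj : t.length + 1 ≤ j) :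
    ((ofDigits b ((b - d) :: (t.map (fun x => b - x - 1) ++
        List.replicate (j - (t.length + 1)) (b - 1) ++ (d - 1) :: t)) : ℕ) : ℤ) =
      (ofDigits b (d :: t) : ℕ) * ((b : ℤ) ^ j - 1) := by
  have hcompl := ofDigits_complement_add hdb ht
  have hpad := ofDigits_replicate_pred_add_one (hd.trans hdb) (j - (t.length + 1))
  have hpred : ofDigits b ((d - 1) :: t) + 1 = ofDigits b (d :: t) := by
    rw [ofDigits_cons, ofDigits_cons]
    omega
  have hpow : b ^ (t.length + 1) * b ^ (j - (t.length + 1)) = b ^ j := by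
    rw [← pow_add, Nat.add_sub_cancel' hj]
  rw [← List.cons_append, ← List.cons_append, ofDigits_append, ofDigits_append]
  simp only [List.length_append, List.length_cons, List.length_map, List.length_replicate,
    Nat.add_sub_cancel' hj]
  zify at hcompl hpad hpred hpow
  push_cast
  linear_combination hcompl + (b : ℤ) ^ (t.length + 1) * hpad + (b : ℤ) ^ j * hpred + hpow

end Nat

theorem stmt3_general (p j m ν M : ℕ) (hp : p.Prime)
    (hm2 : m ≤ p ^ j - 1) (hfac : m = p ^ ν * M) (hM : ¬ p ∣ M) :
    (Nat.digits p M).length ≤ j ∧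
    Nat.ofDigits p
      ((p - (Nat.digits p M).headI) ::
        ((Nat.digits p M).tail.map (fun d => p - d - 1) ++
          List.replicate (j - (Nat.digits p M).length) (p - 1) ++
            ((Nat.digits p M).headI - 1) :: (Nat.digits p M).tail))
      = (M : ℤ) * (p ^ j - 1) := by
  have hM0 : M ≠ 0 := by rintro rfl; exact hM (dvd_zero p)
  have hMlt : M < p ^ j := by
    have : M ≤ m := hfac ▸ Nat.le_mul_of_pos_left M (pow_pos hp.pos ν)
    omega
  have hlen := (Nat.digits_length_le_iff hp.one_lt M).2 hMlt
  refine ⟨hlen, ?_⟩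
  have hdigits := Nat.digits_def' hp.one_lt (Nat.pos_of_ne_zero hM0)
  have hd : 1 ≤ M % p := Nat.pos_of_ne_zero fun h => hM (Nat.dvd_of_mod_eq_zero h)
  rw [hdigits] at hlen ⊢
  simp only [List.headI, List.tail, List.length_cons]
  rw [Nat.ofDigits_mul_pow_sub_one hd (Nat.mod_lt M hp.pos).le
    (fun x hx => Nat.digits_lt_base hp.one_lt hx) hlen, ← hdigits, Nat.ofDigits_digits]

/-- Let `p` be prime, `1 ≤ m ≤ p^j − 1`, and write `m = p^ν·M` with `p ∤ M`, where `M` has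
base-`p` digits `[m_θ,…,m_1,m_0]` (so `Nat.digits p M = [m_0, m_1, …, m_θ]`) with `m_θ ≥ 1`
and `θ < j`.  Then the base-`p` expansion of `M(p^j − 1)` is (big-endian)
`[m_θ,…,m_1,(m_0−1),(p−1),…,(p−1),(p−m_θ−1),…,(p−m_1−1),(p−m_0)]`, where `(p−1)` is
repeated `j−θ−1` times.  Here the expansion is expressed little-endian via `Nat.ofDigits`. -/
theorem stmt3 (p j m ν M : ℕ) (hp : p.Prime) (hj : 1 ≤ j) (hm1 : 1 ≤ m)
    (hm2 : m ≤ p ^ j - 1) (hfac : m = p ^ ν * M) (hM : ¬ p ∣ M) :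
    (Nat.digits p M).length ≤ j ∧
    Nat.ofDigits p
      ((p - (Nat.digits p M).headI) ::
        ((Nat.digits p M).tail.map (fun d => p - d - 1) ++
          List.replicate (j - (Nat.digits p M).length) (p - 1) ++
            ((Nat.digits p M).headI - 1) :: (Nat.digits p M).tail))
      = (M : ℤ) * (p ^ j - 1) :=
  stmt3_general p j m ν M hp hm2 hfac hM
end

section
/- For a prime p, integers l ≥ 1, j ≥ 1, and positive integers a_1,...,a_{l+1}, writing a_i = A_i p^j + B_i with 0 ≤ B_i < p^j and A_i ≥ 0, the p-adic valuation of the multinomial coefficient (a_1+...+a_{l+1})!/(a_1!...a_{l+1}!) is at least the sum of the p-adic valuations of the multinomial coefficients (A_1+...+A_{l+1})!/(A_1!...A_{l+1}!) and (B_1+...+B_{l+1})!/(B_1!...B_{l+1}!). -/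
/-!
By Legendre's formula, `(p - 1) v_p((∑ f_i)! / ∏ f_i!) = ∑ s(f_i) - s(∑ f_i)`, where `s` is the
base-`p` digit sum. If `B < p ^ j` the digits of `A p^j + B` are those of `B`, padded with zeros,
followed by those of `A`, so `s(a_i) = s(A_i) + s(B_i)`; the claim then reduces to
`s(∑ A_i p^j + ∑ B_i) ≤ s(∑ A_i) + s(∑ B_i)`, the subadditivity of `s`.
-/

open Finset Nat

variable {p : ℕ}

theorem Nat.digits_sum_mul_pow_add (hp : 1 < p) {j A B : ℕ} (hB : B < p ^ j) :
    (p.digits (A * p ^ j + B)).sum = (p.digits A).sum + (p.digits B).sum := by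
  rcases Nat.eq_zero_or_pos A with rfl | hA
  · simp
  have hlen : (p.digits B).length ≤ j := by
    rcases Nat.eq_zero_or_pos B with rfl | hB0
    · simp
    · rw [Nat.length_digits p B hp hB0.ne']
      exact (Nat.log_lt_iff_lt_pow hp hB0.ne').mpr hB
  have hdigits := Nat.digits_append_zeroes_append_digits (b := p)
    (k := j - (p.digits B).length) (n := B) hp hA
  rw [Nat.add_sub_cancel' hlen, add_comm B, mul_comm] at hdigits
  rw [← hdigits]
  simp [add_comm]

theorem Nat.digits_sum_mul_pow (hp : 1 < p) (j A : ℕ) :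
    (p.digits (A * p ^ j)).sum = (p.digits A).sum := by
  simpa using Nat.digits_sum_mul_pow_add hp (A := A) (pow_pos (zero_lt_one.trans hp) j)

namespace padicValNat

variable [Fact p.Prime]

theorem finset_prod {ι : Type*} (s : Finset ι) (f : ι → ℕ) (hf : ∀ i ∈ s, f i ≠ 0) :
    padicValNat p (∏ i ∈ s, f i) = ∑ i ∈ s, padicValNat p (f i) := by
  rw [← Nat.factorization_def _ Fact.out, Nat.factorization_prod hf, Finset.sum_apply']
  exact Finset.sum_congr rfl fun i hi => Nat.factorization_def _ Fact.out

theorem sub_one_mul_factorial_int (n : ℕ) :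
    ((p : ℤ) - 1) * padicValNat p n ! = n - (p.digits n).sum := by
  have hp1 : 1 ≤ p := (Fact.out : p.Prime).one_le
  have h := congrArg (Nat.cast : ℕ → ℤ) (sub_one_mul_padicValNat_factorial (p := p) n)
  rwa [Nat.cast_mul, Nat.cast_sub (Nat.digit_sum_le p n), Nat.cast_sub hp1, Nat.cast_one] at h

theorem sub_one_mul_multinomial {ι : Type*} (s : Finset ι) (f : ι → ℕ) :
    ((p : ℤ) - 1) * padicValNat p (Nat.multinomial s f) =
      ∑ i ∈ s, ((p.digits (f i)).sum : ℤ) - (p.digits (∑ i ∈ s, f i)).sum := by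
  have hv := congrArg (padicValNat p) (Nat.multinomial_spec s f)
  rw [padicValNat.mul (Finset.prod_ne_zero_iff.mpr fun i _ => (Nat.factorial_pos _).ne')
      (Nat.multinomial_pos s f).ne',
    finset_prod s _ fun i _ => (Nat.factorial_pos _).ne'] at hv
  have hv' := congrArg (fun n : ℕ => ((p : ℤ) - 1) * n) hv
  simp only [Nat.cast_add, Nat.cast_sum, mul_add, Finset.mul_sum, sub_one_mul_factorial_int,
    Finset.sum_sub_distrib] at hv'
  linarith

end padicValNat

theorem Nat.digits_sum_add_le [Fact p.Prime] (m n : ℕ) :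
    (p.digits (m + n)).sum ≤ (p.digits m).sum + (p.digits n).sum := by
  -- the defect `s(m) + s(n) - s(m + n)` is `(p - 1) v_p(binom(m + n, m)) ≥ 0`
  have h := padicValNat.sub_one_mul_multinomial (p := p) univ ![m, n]
  have hp : (1 : ℤ) ≤ p := by exact_mod_cast (Fact.out : p.Prime).one_le
  simp only [Fin.sum_univ_two, Matrix.cons_val_zero, Matrix.cons_val_one] at h
  have : (0 : ℤ) ≤ ((p : ℤ) - 1) * padicValNat p (Nat.multinomial univ ![m, n]) := by positivity
  omega

theorem padicValNat_multinomial_add_le_multinomial_mul_pow_add [Fact p.Prime] {ι : Type*}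
    (s : Finset ι) (j : ℕ) (A B : ι → ℕ) (hB : ∀ i ∈ s, B i < p ^ j) :
    padicValNat p (Nat.multinomial s A) + padicValNat p (Nat.multinomial s B)
      ≤ padicValNat p (Nat.multinomial s fun i => A i * p ^ j + B i) := by
  have hp : 1 < p := (Fact.out : p.Prime).one_lt
  rw [← Nat.cast_le (α := ℤ), Nat.cast_add,
    ← mul_le_mul_iff_right₀ (a := (p : ℤ) - 1) (by simp [hp]), mul_add,
    padicValNat.sub_one_mul_multinomial, padicValNat.sub_one_mul_multinomial,
    padicValNat.sub_one_mul_multinomial]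
  have hsummands : ∑ i ∈ s, ((p.digits (A i * p ^ j + B i)).sum : ℤ)
      = ∑ i ∈ s, ((p.digits (A i)).sum : ℤ) + ∑ i ∈ s, ((p.digits (B i)).sum : ℤ) := by
    rw [← Finset.sum_add_distrib]
    refine Finset.sum_congr rfl fun i hi => ?_
    rw [Nat.digits_sum_mul_pow_add hp (hB i hi), Nat.cast_add]
  have htotal : (p.digits (∑ i ∈ s, (A i * p ^ j + B i))).sum
      ≤ (p.digits (∑ i ∈ s, A i)).sum + (p.digits (∑ i ∈ s, B i)).sum := by
    rw [Finset.sum_add_distrib, ← Finset.sum_mul, ← Nat.digits_sum_mul_pow hp j (∑ i ∈ s, A i)]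
    exact Nat.digits_sum_add_le (p := p) _ _
  omega

theorem stmt4_general (p l j : ℕ) (hp : p.Prime)
    (a A B : Fin (l + 1) → ℕ)
    (hsplit : ∀ i, a i = A i * p ^ j + B i) (hB : ∀ i, B i < p ^ j) :
    padicValNat p (Nat.multinomial univ A) + padicValNat p (Nat.multinomial univ B)
      ≤ padicValNat p (Nat.multinomial univ a) := by
  have : Fact p.Prime := ⟨hp⟩
  rw [funext hsplit]
  exact padicValNat_multinomial_add_le_multinomial_mul_pow_add (p := p) univ j A B fun i _ => hB i

/-- Splitting each summand into high and low base-`p` parts can only decrease the total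
number of carries: the `p`-adic valuation of the multinomial coefficient of the `a_i`'s is
at least the sum of those of the multinomial coefficients of the `A_i`'s and the `B_i`'s,
where `a_i = A_i p^j + B_i` with `0 ≤ B_i < p^j`. -/
theorem stmt4 (p l j : ℕ) (hp : p.Prime) (hl : 1 ≤ l) (hj : 1 ≤ j)
    (a A B : Fin (l + 1) → ℕ) (ha : ∀ i, 0 < a i)
    (hsplit : ∀ i, a i = A i * p ^ j + B i) (hB : ∀ i, B i < p ^ j) :
    padicValNat p (Nat.multinomial univ A) + padicValNat p (Nat.multinomial univ B)
      ≤ padicValNat p (Nat.multinomial univ a) :=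
  stmt4_general p l j hp a A B hsplit hB
end

section
/- Let l ≥ 1 and n ≥ 1 be integers. If for every prime p ≤ l dividing n+1 one has v_p(n+1) ≥ log_p(l+1), then (n+1)^l divides the multinomial coefficient ((l+1)n)! / (n!)^{l+1}. -/
open Finset

lemma div_aux (l P : ℕ) (hP : 0 < P) : l ≤ (l+1)*(P-1)/P + l/P := by
  obtain ⟨Q, rfl⟩ : ∃ Q, P = Q + 1 := ⟨P - 1, by omega⟩
  simp only [Nat.add_sub_cancel]
  have ht : l / (Q+1) ≤ l := Nat.div_le_self _ _
  have key : l - l / (Q+1) ≤ (l+1)*Q/(Q+1) := by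
    rw [Nat.le_div_iff_mul_le (by omega)]
    have h1 := Nat.div_add_mod l (Q+1)
    have h2 := Nat.mod_lt l (y := Q+1) (by omega)
    set t := l / (Q+1) with htd
    set s := l % (Q+1) with hsd
    obtain ⟨u, hu⟩ : ∃ u, l = t + u := ⟨l - t, by omega⟩
    rw [hu, Nat.add_sub_cancel_left]
    have hu2 : u = Q * t + s := by nlinarith
    nlinarith
  omega

lemma termA (l n P : ℕ) (hP : 0 < P) (hd : P ∣ n + 1) :
    (l+1) * (n / P) + l ≤ (l+1) * n / P + l / P := by
  obtain ⟨k, hk⟩ := hd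
  rcases k with _ | k'
  · omega
  have hn' : n = P * k' + (P - 1) := by
    have h2 : P * (k' + 1) = P * k' + P := by ring
    rw [h2] at hk
    omega
  have hd1 : n / P = k' := by
    rw [hn', Nat.mul_add_div hP, Nat.div_eq_of_lt (by omega), Nat.add_zero]
  have hd2 : (l+1) * n = P * ((l+1) * k') + (l+1)*(P-1) := by
    rw [hn']; ring
  rw [hd1, hd2, Nat.mul_add_div hP, add_assoc]
  exact Nat.add_le_add_left (div_aux l P hP) _

lemma termB (l V W m : ℕ) (hV : 0 < V) (hW : 0 < W) (hlV : l + 1 ≤ V) (hm : ¬ W ∣ m) :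
    (l+1) * ((V*m - 1) / (V*W)) + l / W ≤ (l+1) * (V*m - 1) / (V*W) := by
  have ha := Nat.div_add_mod m W
  have hrlt : m % W < W := Nat.mod_lt _ hW
  set a := m / W with had
  set r := m % W with hrd
  have hr1 : 1 ≤ r := by
    rcases Nat.eq_zero_or_pos r with h0 | h
    · exact absurd (Nat.dvd_of_mod_eq_zero h0) hm
    · exact h
  have hVr : 1 ≤ V * r := Nat.one_le_iff_ne_zero.2 (by positivity)
  have hVrlt : V * r - 1 < V * W := by
    have : V * r ≤ V * W := Nat.mul_le_mul_left V (le_of_lt hrlt)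
    omega
  have hn' : V * m - 1 = V * W * a + (V * r - 1) := by
    have h1 : V * m = V * W * a + V * r := by rw [← ha]; ring
    omega
  have hVW : 0 < V * W := by positivity
  have hd1 : (V*m - 1) / (V*W) = a := by
    rw [hn', Nat.mul_add_div hVW, Nat.div_eq_of_lt hVrlt, Nat.add_zero]
  have hd2 : (l+1) * (V*m - 1) = (V*W) * ((l+1) * a) + (l+1)*(V*r - 1) := by
    rw [hn']; ring
  rw [hd1, hd2, Nat.mul_add_div hVW]
  obtain ⟨w, hw⟩ : ∃ w, V * r = w + 1 := ⟨V*r - 1, by omega⟩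
  have hlr1 : l + 1 ≤ (l+1) * r := Nat.le_mul_of_pos_right _ hr1
  obtain ⟨c, hc⟩ : ∃ c, (l+1) * r = c + 1 := ⟨(l+1)*r - 1, by omega⟩
  have step1 : V * ((l+1)*r - 1) ≤ (l+1)*(V*r - 1) := by
    have e1 : (l+1)*(V*r - 1) = (l+1)*w := by
      rw [hw, Nat.add_sub_cancel]
    have e2 : (l+1)*w + (l+1) = V*c + V := by
      have h0 : (l+1)*(V*r) = V*((l+1)*r) := by ring
      rw [hw, hc] at h0
      have t1 : (l+1)*(w+1) = (l+1)*w + (l+1) := by ring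
      have t2 : V*(c+1) = V*c + V := by ring
      omega
    rw [e1, hc, Nat.add_sub_cancel]
    omega
  have step2 : l / W ≤ ((l+1)*(V*r-1))/(V*W) := by
    calc l / W ≤ ((l+1)*r - 1) / W := by
          apply Nat.div_le_div_right; omega
      _ = V * ((l+1)*r - 1) / (V*W) := (Nat.mul_div_mul_left _ _ hV).symm
      _ ≤ ((l+1)*(V*r-1))/(V*W) := Nat.div_le_div_right step1
  exact Nat.add_le_add_left step2 _

lemma trivTerm (l n c : ℕ) : (l+1) * (n / c) ≤ (l+1) * n / c :=
  Nat.mul_div_le_mul_div_assoc _ _ _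

lemma keySum (l n v p B : ℕ) (hp : 2 ≤ p) (hv0 : 1 ≤ v) (hv : p^v ∣ n+1)
    (hv1 : ¬ p^(v+1) ∣ n+1) (hlv : l + 1 ≤ p^v) (hB : 2*v < B) :
    l * v + (l+1) * ∑ i ∈ Ico 1 B, n / p^i ≤ ∑ i ∈ Ico 1 B, (l+1)*n / p^i := by
  obtain ⟨m, hm⟩ := hv
  have hpm : ¬ p ∣ m := by
    intro hpm
    exact hv1 (by rw [hm, pow_succ]; exact mul_dvd_mul dvd_rfl hpm)
  set f : ℕ → ℕ := fun i => n / p^i with hf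
  set g : ℕ → ℕ := fun i => (l+1)*n / p^i with hg
  have e1' : (∑ i ∈ Ico 1 (v+1), g i) + ∑ i ∈ Ico (v+1) B, g i = ∑ i ∈ Ico 1 B, g i :=
    Finset.sum_Ico_consecutive g (by omega) (by omega)
  have e2' : (∑ i ∈ Ico (v+1) (2*v+1), g i) + ∑ i ∈ Ico (2*v+1) B, g i
      = ∑ i ∈ Ico (v+1) B, g i := Finset.sum_Ico_consecutive g (by omega) (by omega)
  set C : ℕ := ∑ i ∈ Ico 1 (v+1), l / p^i with hC
  -- part A
  have partA : (l+1) * (∑ i ∈ Ico 1 (v+1), f i) + l * v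
      ≤ (∑ i ∈ Ico 1 (v+1), g i) + C := by
    have step := Finset.sum_le_sum (f := fun i => (l+1) * f i + l)
        (g := fun i => g i + l / p^i) (s := Ico 1 (v+1)) ?_
    · have hcard : (v+1) - 1 = v := by omega
      rw [Finset.sum_add_distrib, Finset.sum_add_distrib, Finset.sum_const,
        Nat.card_Ico, hcard, smul_eq_mul] at step
      rw [Finset.mul_sum, mul_comm l v]
      exact step
    · intro i hi
      rw [Finset.mem_Ico] at hi
      simp only [hf, hg]
      exact termA l n (p^i) (by positivity)
        (dvd_trans (pow_dvd_pow p (by omega)) ⟨m, hm⟩)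
  -- part B
  have partB : (l+1) * (∑ i ∈ Ico (v+1) (2*v+1), f i) + C
      ≤ ∑ i ∈ Ico (v+1) (2*v+1), g i := by
    have hC' : C = ∑ i ∈ Ico (v+1) (2*v+1), l / p^(i-v) := by
      rw [hC, Finset.sum_Ico_eq_sum_range, Finset.sum_Ico_eq_sum_range]
      have h1 : (v+1) - 1 = v := by omega
      have h2 : 2*v+1 - (v+1) = v := by omega
      rw [h1, h2]
      apply Finset.sum_congr rfl
      intro i _
      have h3 : v + 1 + i - v = 1 + i := by omega
      rw [h3]
    rw [hC', Finset.mul_sum, ← Finset.sum_add_distrib]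
    apply Finset.sum_le_sum
    intro i hi
    rw [Finset.mem_Ico] at hi
    simp only [hf, hg]
    have hpi : p ^ i = p^v * p^(i-v) := by
      rw [← pow_add]
      congr 1
      omega
    have hn' : n = p^v * m - 1 := by omega
    have hmW : ¬ p^(i-v) ∣ m := fun hd =>
      hpm (dvd_trans (dvd_pow_self p (by omega)) hd)
    rw [hn', hpi]
    exact termB l (p^v) (p^(i-v)) m (by positivity) (by positivity) hlv hmW
  -- part C
  have partC : (l+1) * (∑ i ∈ Ico (2*v+1) B, f i) ≤ ∑ i ∈ Ico (2*v+1) B, g i := by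
    rw [Finset.mul_sum]
    apply Finset.sum_le_sum
    intro i _
    simp only [hf, hg]
    exact trivTerm l n (p^i)
  have d1 : (l+1) * (∑ i ∈ Ico 1 B, f i)
      = (l+1) * (∑ i ∈ Ico 1 (v+1), f i) + (l+1) * (∑ i ∈ Ico (v+1) (2*v+1), f i)
        + (l+1) * (∑ i ∈ Ico (2*v+1) B, f i) := by
    rw [← Finset.sum_Ico_consecutive f (show 1 ≤ v+1 by omega) (show v+1 ≤ B by omega),
      ← Finset.sum_Ico_consecutive f (show v+1 ≤ 2*v+1 by omega) (show 2*v+1 ≤ B by omega)]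
    ring
  show l * v + (l + 1) * ∑ i ∈ Ico 1 B, f i ≤ ∑ i ∈ Ico 1 B, g i
  linarith [partA, partB, partC, e1', e2', d1]

/-- If for every prime `p ≤ l` dividing `n+1` one has `v_p(n+1) ≥ log_p(l+1)`, then
`(n+1)^l` divides the multinomial coefficient `((l+1)n)! / (n!)^{l+1}`. -/
theorem stmt5 (l n : ℕ) (hl : 1 ≤ l) (hn : 1 ≤ n)
    (h : ∀ p : ℕ, p.Prime → p ≤ l → p ∣ n + 1 →
      Real.logb p (l + 1) ≤ (padicValNat p (n + 1) : ℝ)) :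
    (n + 1) ^ l ∣ ((l + 1) * n).factorial / (n.factorial) ^ (l + 1) := by
  have hD : (n.factorial)^(l+1) ∣ ((l+1) * n).factorial := by
    have h0 := Nat.prod_factorial_dvd_factorial_sum (Finset.range (l+1)) (fun _ => n)
    simpa [Finset.prod_const, Finset.sum_const, Finset.card_range, smul_eq_mul,
      mul_comm] using h0
  rw [Nat.dvd_div_iff_mul_dvd hD]
  have hNfac : ((l+1) * n).factorial ≠ 0 := Nat.factorial_ne_zero _
  have hfn : (n.factorial) ≠ 0 := Nat.factorial_ne_zero _
  have hLHS : (n.factorial)^(l+1) * (n+1)^l ≠ 0 := by positivity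
  rw [← Nat.factorization_le_iff_dvd hLHS hNfac, Finsupp.le_def]
  intro p
  by_cases hp : p.Prime
  swap
  · simp [Nat.factorization_eq_zero_of_not_prime _ hp]
  haveI := Fact.mk hp
  rw [Nat.factorization_mul (by positivity) (by positivity), Nat.factorization_pow,
    Nat.factorization_pow]
  simp only [Finsupp.coe_add, Finsupp.coe_smul, Pi.add_apply, Pi.smul_apply, smul_eq_mul]
  set v := (n+1).factorization p with hvdef
  set B := max (2*v+1) (Nat.log p ((l+1)*n) + 1) with hBdef
  have hlogN : Nat.log p ((l+1)*n) < B := by omega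
  have hnleN : n ≤ (l+1)*n := Nat.le_mul_of_pos_left n (by omega)
  have hlogn : Nat.log p n < B := lt_of_le_of_lt (Nat.log_mono_right hnleN) hlogN
  have legn : (n.factorial).factorization p = ∑ i ∈ Finset.Ico 1 B, n / p^i := by
    rw [Nat.factorization_def _ hp]
    exact padicValNat_factorial hlogn
  have legN : (((l+1)*n).factorial).factorization p
      = ∑ i ∈ Finset.Ico 1 B, (l+1)*n / p^i := by
    rw [Nat.factorization_def _ hp]
    exact padicValNat_factorial hlogN
  rw [legn, legN]
  by_cases hdvd : p ∣ n + 1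
  · have hv1 : 1 ≤ v := hp.factorization_pos_of_dvd (by omega) hdvd
    have hpv : p^v ∣ n+1 := Nat.ordProj_dvd _ _
    have hnd : ¬ p^(v+1) ∣ n+1 := Nat.pow_succ_factorization_not_dvd (by omega) hp
    have hlv : l + 1 ≤ p^v := by
      by_cases hpl : p ≤ l
      · have hlog := h p hp hpl hdvd
        have hplt : (1:ℝ) < p := by exact_mod_cast hp.one_lt
        have hx : (0:ℝ) < (l:ℝ)+1 := by positivity
        have hpv' : padicValNat p (n+1) = v := (Nat.factorization_def _ hp).symm
        rw [hpv'] at hlog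
        have h2 := (Real.logb_le_iff_le_rpow hplt hx).1 hlog
        rw [Real.rpow_natCast] at h2
        have h3 : ((l+1 : ℕ) : ℝ) ≤ ((p^v : ℕ) : ℝ) := by push_cast; linarith
        exact_mod_cast h3
      · have h4 : l + 1 ≤ p := by omega
        exact le_trans h4 (Nat.le_self_pow (by omega) p)
    have hk := keySum l n v p B hp.two_le hv1 hpv hnd hlv (by omega)
    linarith [hk]
  · have hv0 : v = 0 := Nat.factorization_eq_zero_of_not_dvd hdvd
    rw [hv0]
    simp only [mul_zero, add_zero]
    rw [Finset.mul_sum]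
    exact Finset.sum_le_sum fun i _ => trivTerm l n (p^i)
end

section
/- For all integers l ≥ 1 and n ≥ l, the number (n+1)^l divides the multinomial coefficient ((l+1)n)!/(n!)^{l+1}; i.e., the multinomial Catalan number C_l(n) = ((l+1)n)!/((n+1)^l (n!)^{l+1}) is an integer. -/
open Nat

/-- Base-`p` digit sum. -/
def S (p m : ℕ) : ℕ := (Nat.digits p m).sum

lemma S_step {p : ℕ} (hp : 1 < p) (x d : ℕ) (hd : d < p) :
    S p (p * x + d) = d + S p x := by
  rcases Nat.eq_zero_or_pos (p * x + d) with h | h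
  · have hx : x = 0 := by
      rcases Nat.eq_zero_or_pos x with hx | hx
      · exact hx
      · exfalso; nlinarith
    have hd0 : d = 0 := by omega
    simp [hx, hd0, S]
  · unfold S
    rw [Nat.digits_def' hp h]
    have h1 : (p * x + d) % p = d := by
      rw [Nat.mul_add_mod]; exact Nat.mod_eq_of_lt hd
    have h2 : (p * x + d) / p = x := by
      rw [Nat.mul_add_div (by omega)]; simp [Nat.div_eq_of_lt hd]
    rw [h1, h2]; simp [Nat.add_comm]

lemma S_decomp {p : ℕ} (hp : 1 < p) (m : ℕ) : S p m = m % p + S p (m / p) := by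
  have := S_step hp (m / p) (m % p) (Nat.mod_lt _ (by omega))
  rwa [Nat.div_add_mod] at this

lemma S_le_self {p : ℕ} (hp : 1 < p) : ∀ m, S p m ≤ m := by
  intro m
  induction m using Nat.strong_induction_on with
  | _ m ih =>
    rcases Nat.eq_zero_or_pos m with h | h
    · simp [h, S]
    · rw [S_decomp hp m]
      have hlt : m / p < m := Nat.div_lt_self h hp
      have := ih (m / p) hlt
      have h2 : m % p + p * (m / p) = m := by
        rw [Nat.add_comm, Nat.div_add_mod]
      nlinarith

lemma S_pos {p : ℕ} (hp : 1 < p) {m : ℕ} (hm : m ≠ 0) : 1 ≤ S p m := by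
  induction m using Nat.strong_induction_on with
  | _ m ih =>
    rw [S_decomp hp m]
    rcases Nat.eq_zero_or_pos (m % p) with h | h
    · have hd : m / p ≠ 0 := by
        intro h0
        have := Nat.div_add_mod m p
        rw [h0, Nat.mul_zero] at this
        omega
      have hlt : m / p < m := Nat.div_lt_self (by omega) hp
      have := ih (m / p) hlt hd
      omega
    · omega

lemma S_add_le {p : ℕ} (hp : p.Prime) (x y : ℕ) : S p (x + y) ≤ S p x + S p y := by
  haveI : Fact p.Prime := ⟨hp⟩
  have hx := sub_one_mul_padicValNat_factorial (p := p) x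
  have hy := sub_one_mul_padicValNat_factorial (p := p) y
  have hxy := sub_one_mul_padicValNat_factorial (p := p) (x + y)
  have hdvd : x ! * y ! ∣ (x + y)! := Nat.factorial_mul_factorial_dvd_factorial_add x y
  have hv : padicValNat p (x !) + padicValNat p (y !) ≤ padicValNat p ((x + y)!) := by
    have h1 : padicValNat p (x ! * y !) ≤ padicValNat p ((x + y)!) := by
      haveI : Fact p.Prime := ⟨hp⟩
      exact (padicValNat_dvd_iff_le (Nat.factorial_ne_zero _)).mp
        (dvd_trans pow_padicValNat_dvd hdvd)
    rwa [padicValNat.mul (Nat.factorial_ne_zero x) (Nat.factorial_ne_zero y)] at h1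
  have h2 : (p - 1) * padicValNat p (x !) + (p - 1) * padicValNat p (y !) ≤
      (p - 1) * padicValNat p ((x + y)!) := by
    rw [← Nat.mul_add]
    exact Nat.mul_le_mul_left _ hv
  have hsx : S p x ≤ x := S_le_self hp.one_lt x
  have hsy : S p y ≤ y := S_le_self hp.one_lt y
  have hsxy : S p (x + y) ≤ x + y := S_le_self hp.one_lt (x + y)
  unfold S at *
  omega

lemma S_nsmul_le {p : ℕ} (hp : p.Prime) (k y : ℕ) : S p (k * y) ≤ k * S p y := by
  induction k with
  | zero => simp [S]
  | succ k ih =>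
    have : (k + 1) * y = k * y + y := by ring
    rw [this]
    calc S p (k * y + y) ≤ S p (k * y) + S p y := S_add_le hp _ _
      _ ≤ k * S p y + S p y := by omega
      _ = (k + 1) * S p y := by ring

lemma S_mul_le {p : ℕ} (hp : p.Prime) (x y : ℕ) : S p (x * y) ≤ S p x * S p y := by
  induction x using Nat.strong_induction_on with
  | _ x ih =>
    rcases Nat.eq_zero_or_pos x with h | h
    · simp [h, S]
    · have hx : x = p * (x / p) + x % p := by
        rw [Nat.add_comm, Nat.mod_add_div]
      have hxy : x * y = p * (x / p * y) + x % p * y := by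
        calc x * y = (p * (x / p) + x % p) * y := by rw [← hx]
          _ = p * (x / p * y) + x % p * y := by ring
      calc S p (x * y) = S p (p * (x / p * y) + x % p * y) := by rw [← hxy]
        _ ≤ S p (p * (x / p * y)) + S p (x % p * y) := S_add_le hp _ _
        _ = S p (x / p * y) + S p (x % p * y) := by
            congr 1
            have := S_step hp.one_lt (x / p * y) 0 hp.pos
            simpa using this
        _ ≤ S p (x / p) * S p y + x % p * S p y := by
            have h1 := ih (x / p) (Nat.div_lt_self h hp.one_lt)
            have h2 := S_nsmul_le hp (x % p) y
            exact Nat.add_le_add h1 h2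
        _ = (x % p + S p (x / p)) * S p y := by ring
        _ = S p x * S p y := by rw [← S_decomp hp.one_lt]

lemma S_concat {p : ℕ} (hp : 1 < p) (a : ℕ) :
    ∀ A B, B < p ^ a → S p (A * p ^ a + B) = S p A + S p B := by
  induction a with
  | zero =>
    intro A B hB
    simp only [pow_zero] at hB
    have hB0 : B = 0 := by omega
    simp [hB0, S]
  | succ a ih =>
    intro A B hB
    have hkey : A * p ^ (a + 1) + B = p * (A * p ^ a + B / p) + B % p := by
      have h1 : B = p * (B / p) + B % p := by rw [Nat.add_comm, Nat.mod_add_div]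
      calc A * p ^ (a + 1) + B = A * p ^ (a+1) + (p * (B / p) + B % p) := by rw [← h1]
        _ = p * (A * p ^ a + B / p) + B % p := by ring
    rw [hkey, S_step hp _ _ (Nat.mod_lt _ (by omega)),
      ih A (B / p) (Nat.div_lt_of_lt_mul (by rw [← pow_succ']; exact hB)),
      S_decomp hp B]
    omega

lemma S_compl {p : ℕ} (hp : 1 < p) (a : ℕ) :
    ∀ x, x < p ^ a → S p x + S p (p ^ a - 1 - x) = a * (p - 1) := by
  induction a with
  | zero =>
    intro x hx
    simp only [pow_zero] at hx
    have : x = 0 := by omega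
    simp [this, S]
  | succ a ih =>
    intro x hx
    have hx' : x / p < p ^ a := by
      apply Nat.div_lt_of_lt_mul
      rw [← pow_succ']; exact hx
    have hpa : 1 ≤ p ^ a := Nat.one_le_pow _ _ (by omega)
    have hd : x % p < p := Nat.mod_lt _ (by omega)
    have hdm : x = p * (x / p) + x % p := by rw [Nat.add_comm, Nat.mod_add_div]
    have hkey : p ^ (a + 1) - 1 - x = p * (p ^ a - 1 - x / p) + (p - 1 - x % p) := by
      have h1 : p ^ (a + 1) = p * p ^ a := by rw [pow_succ']
      have hsum : (p ^ a - 1 - x / p) + (x / p) + 1 = p ^ a := by omega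
      have e1 : p * (p ^ a - 1 - x / p) + p * (x / p) + p = p * p ^ a := by
        calc p * (p ^ a - 1 - x / p) + p * (x / p) + p
            = p * ((p ^ a - 1 - x / p) + (x / p) + 1) := by ring
          _ = p * p ^ a := by rw [hsum]
      omega
    rw [hkey, S_step hp _ _ (by omega)]
    nth_rewrite 1 [hdm]
    rw [S_step hp _ _ hd]
    have := ih (x / p) hx'
    have harith : x % p + (p - 1 - x % p) = p - 1 := by omega
    have hmul : (a + 1) * (p - 1) = a * (p - 1) + (p - 1) := by ring
    omega

lemma S_pow_sub_one {p : ℕ} (hp : 1 < p) (a : ℕ) : S p (p ^ a - 1) = a * (p - 1) := by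
  have := S_compl hp a 0 (Nat.one_le_pow _ _ (by omega))
  simpa [S] using this

lemma S_one {p : ℕ} (hp : 1 < p) : S p 1 = 1 := by
  have := S_step hp 0 1 hp
  simpa [S] using this

/-- Key digit-sum inequality. -/
lemma key_digits {p : ℕ} (hp : p.Prime) (a c n : ℕ) (hc : 2 ≤ c) (hcn : c ≤ n + 1)
    (hdvd : p ^ a ∣ n + 1) :
    S p (c * n) + (c - 1) * (a * (p - 1)) ≤ c * S p n := by
  obtain ⟨m, rfl⟩ : ∃ m, c = m + 2 := ⟨c - 2, by omega⟩
  set c := m + 2 with hcdef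
  have hp1 : 1 < p := hp.one_lt
  obtain ⟨P, hPeq⟩ : ∃ P, p ^ a = P := ⟨_, rfl⟩
  rw [hPeq] at hdvd
  have hP1 : 1 ≤ P := by rw [← hPeq]; exact Nat.one_le_pow _ _ (by omega)
  have hconcat : ∀ A B, B < P → S p (A * P + B) = S p A + S p B := by
    rw [← hPeq]; exact S_concat hp1 a
  have hcompl : ∀ x, x < P → S p x + S p (P - 1 - x) = a * (p - 1) := by
    rw [← hPeq]; exact S_compl hp1 a
  have hpow : S p (P - 1) = a * (p - 1) := by
    have := hcompl 0 (by omega)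
    simpa [S] using this
  obtain ⟨u, hu⟩ := hdvd
  have hu1 : 1 ≤ u := by
    rcases Nat.eq_zero_or_pos u with h | h
    · exfalso; rw [h, Nat.mul_zero] at hu; omega
    · exact h
  obtain ⟨v, rfl⟩ : ∃ v, u = v + 1 := ⟨u - 1, by omega⟩
  -- digit sum of n
  have hn_eq : n = v * P + (P - 1) := by
    have h1 : P * (v + 1) = v * P + P := by ring
    omega
  have hSn : S p n = S p v + a * (p - 1) := by
    rw [hn_eq, hconcat v (P - 1) (by omega), hpow]
  -- construct q, w with c + w = q * P, w < P, 1 ≤ q ≤ c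
  obtain ⟨q, w, hqw, hwP, hq1, hqc⟩ :
      ∃ q w, c + w = q * P ∧ w < P ∧ 1 ≤ q ∧ q ≤ c := by
    by_cases hdv : P ∣ c
    · obtain ⟨k, hk⟩ := hdv
      have hk' : c = k * P := by rw [hk, Nat.mul_comm]
      have hk1 : 1 ≤ k := by
        rcases Nat.eq_zero_or_pos k with h | h
        · exfalso; rw [h, Nat.zero_mul] at hk'; omega
        · exact h
      have hkc : k ≤ c := by
        have h1 : k * 1 ≤ k * P := Nat.mul_le_mul_left _ hP1
        omega
      exact ⟨k, 0, by omega, by omega, hk1, hkc⟩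
    · have hr : c % P ≠ 0 := fun h => hdv (Nat.dvd_of_mod_eq_zero h)
      have hP2 : 2 ≤ P := by
        rcases Nat.eq_or_lt_of_le hP1 with h | h
        · exfalso; exact hdv (by rw [← h]; exact one_dvd c)
        · omega
      obtain ⟨k, r, hdm, hrP, hrne⟩ : ∃ k r, P * k + r = c ∧ r < P ∧ r ≠ 0 :=
        ⟨c / P, c % P, Nat.div_add_mod c P, Nat.mod_lt _ (by omega), hr⟩
      have hkk : 2 * k ≤ P * k := Nat.mul_le_mul_right _ hP2
      have h2 : (k + 1) * P = P * k + P := by ring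
      exact ⟨k + 1, P - r, by omega, by omega, by omega, by omega⟩
  obtain ⟨g, hg⟩ : ∃ g, q + g = c := ⟨c - q, by omega⟩
  -- decomposition of c * n
  have hdec : c * n = (c * v + g) * P + w := by
    have h1 : c * n + c = (c * v + g) * P + w + c := by
      calc c * n + c = c * (n + 1) := by ring
        _ = c * (P * (v + 1)) := by rw [hu]
        _ = c * v * P + c * P := by ring
        _ = c * v * P + (q + g) * P := by rw [hg]
        _ = c * v * P + g * P + (c + w) := by rw [hqw]; ring
        _ = (c * v + g) * P + w + c := by ring
    omega
  have hScn : S p (c * n) = S p (c * v + g) + S p w := by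
    rw [hdec, hconcat _ w (by omega)]
  have h5 : S p (c * v + g) ≤ S p (c * v) + S p g := S_add_le hp _ _
  -- case split on q = 1 vs q ≥ 2
  rcases Nat.eq_or_lt_of_le hq1 with hq | hq
  · -- Case A : q = 1, c ≤ P
    have hcP : c + w = P := by rw [← hq] at hqw; omega
    have hgc : g = c - 1 := by omega
    have h6 : S p (c * v) ≤ c * S p v := S_nsmul_le hp c v
    have h7 : S p g + S p w = a * (p - 1) := by
      have hco := hcompl (c - 1) (by omega)
      have hww : P - 1 - (c - 1) = w := by omega
      rw [hww] at hco
      rw [hgc]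
      omega
    have e1 : c * (S p v + a * (p - 1)) = c * S p v + (m + 1) * (a * (p - 1)) + a * (p - 1) := by
      rw [hcdef]; ring
    have e2 : (c - 1) * (a * (p - 1)) = (m + 1) * (a * (p - 1)) := by
      have h8 : c - 1 = m + 1 := by omega
      rw [h8]
    rw [hSn]
    omega
  · -- Case B : q ≥ 2, so c > P and v ≥ 1
    have hcgtP : P < c := by
      have : 2 * P ≤ q * P := Nat.mul_le_mul_right _ hq
      omega
    have hv1 : 1 ≤ v := by
      rcases Nat.eq_zero_or_pos v with h | h
      · exfalso
        rw [h] at hu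
        simp at hu
        omega
      · exact h
    have hSv1 : 1 ≤ S p v := S_pos hp1 (by omega)
    have h6 : S p (c * v) ≤ S p c * S p v := S_mul_le hp c v
    have hSg : S p g ≤ g := S_le_self hp1 g
    -- claim : S c + S w ≤ q + a(p-1)
    have hclaim : S p c + S p w ≤ q + a * (p - 1) := by
      rcases Nat.eq_zero_or_pos w with hw0 | hw0
      · have hc_eq : c = (q - 1 + 1) * P + 0 := by
          have h9 : q - 1 + 1 = q := by omega
          rw [h9]; omega
        have hSc : S p c = S p (q - 1 + 1) := by
          rw [hc_eq, hconcat _ 0 (by omega)]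
          simp [S]
        have hq' : S p (q - 1 + 1) ≤ q - 1 + 1 := S_le_self hp1 _
        have hSw0 : S p w = 0 := by rw [hw0]; simp [S]
        omega
      · -- w ≥ 1
        have hc_eq : c = (q - 1) * P + (P - w) := by
          have h9 : (q - 1 + 1) * P = (q - 1) * P + P := by ring
          have h10 : q - 1 + 1 = q := by omega
          rw [h10] at h9
          omega
        have hSc : S p c = S p (q - 1) + S p (P - w) := by
          rw [hc_eq, hconcat _ _ (by omega)]
        have hco := hcompl (w - 1) (by omega)
        have hww : P - 1 - (w - 1) = P - w := by omega
        rw [hww] at hco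
        have hSw : S p w ≤ S p (w - 1) + 1 := by
          have h8 : w = (w - 1) + 1 := by omega
          calc S p w = S p ((w - 1) + 1) := by rw [← h8]
            _ ≤ S p (w - 1) + S p 1 := S_add_le hp _ _
            _ = S p (w - 1) + 1 := by rw [S_one hp1]
        have hq' : S p (q - 1) ≤ q - 1 := S_le_self hp1 _
        omega
    have hScc : S p c ≤ c := S_le_self hp1 c
    obtain ⟨t, htc⟩ : ∃ t, S p c + t = c := ⟨c - S p c, by omega⟩
    have e1 : c * S p v = S p c * S p v + t * S p v := by
      have h11 : (S p c + t) * S p v = S p c * S p v + t * S p v := by ring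
      rw [htc] at h11; exact h11
    have e2 : t ≤ t * S p v := Nat.le_mul_of_pos_right t (by omega)
    have e3 : c * (S p v + a * (p - 1)) = c * S p v + (m + 1) * (a * (p - 1)) + a * (p - 1) := by
      rw [hcdef]; ring
    have e4 : (c - 1) * (a * (p - 1)) = (m + 1) * (a * (p - 1)) := by
      have h8 : c - 1 = m + 1 := by omega
      rw [h8]
    rw [hSn]
    omega

lemma key_val {p : ℕ} (hp : p.Prime) (l n : ℕ) (hl : 1 ≤ l) (hn : l ≤ n) :
    l * (n + 1).factorization p + (l + 1) * (n !).factorization p ≤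
      (((l + 1) * n)!).factorization p := by
  haveI : Fact p.Prime := ⟨hp⟩
  rw [Nat.factorization_def _ hp, Nat.factorization_def _ hp, Nat.factorization_def _ hp]
  set a := padicValNat p (n + 1) with ha
  set V1 := padicValNat p (n !) with hV1
  set V2 := padicValNat p (((l + 1) * n)!) with hV2
  have hdvd : p ^ a ∣ n + 1 := pow_padicValNat_dvd
  have hkey := key_digits hp a (l + 1) n (by omega) (by omega) hdvd
  have hkey' : S p ((l + 1) * n) + l * (a * (p - 1)) ≤ (l + 1) * S p n := by
    have h8 : l + 1 - 1 = l := by omega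
    rwa [h8] at hkey
  have h1 : (p - 1) * V1 = n - S p n := sub_one_mul_padicValNat_factorial n
  have h2 : (p - 1) * V2 = (l + 1) * n - S p ((l + 1) * n) :=
    sub_one_mul_padicValNat_factorial ((l + 1) * n)
  have hs1 : S p n ≤ n := S_le_self hp.one_lt n
  have hs2 : S p ((l + 1) * n) ≤ (l + 1) * n := S_le_self hp.one_lt _
  obtain ⟨d, hd⟩ : ∃ d, S p n + d = n := ⟨n - S p n, by omega⟩
  obtain ⟨e, he⟩ : ∃ e, S p ((l + 1) * n) + e = (l + 1) * n := ⟨(l + 1) * n - S p ((l + 1) * n), by omega⟩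
  have h1' : (p - 1) * V1 = d := by omega
  have h2' : (p - 1) * V2 = e := by omega
  apply Nat.le_of_mul_le_mul_left _ (show 0 < p - 1 by have := hp.two_le; omega)
  have e5 : (p - 1) * (l * a + (l + 1) * V1) =
      l * (a * (p - 1)) + (l + 1) * ((p - 1) * V1) := by ring
  have e6 : (l + 1) * ((p - 1) * V1) = (l + 1) * d := by rw [h1']
  have e3 : (l + 1) * (S p n + d) = (l + 1) * S p n + (l + 1) * d := by ring
  have e4 : (l + 1) * (S p n + d) = (l + 1) * n := by rw [hd]
  omega

/-- For all integers `l ≥ 1` and `n ≥ l`, the multinomial Catalan number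
`C_l(n) = ((l+1)n)!/((n+1)^l (n!)^{l+1})` is an integer, i.e. `(n+1)^l` times the
denominator divides `((l+1)n)!`. -/
theorem stmt7 (l n : ℕ) (hl : 1 ≤ l) (hn : l ≤ n) :
    (n + 1) ^ l * (n.factorial) ^ (l + 1) ∣ ((l + 1) * n).factorial := by
  have hA : (n + 1) ^ l * (n.factorial) ^ (l + 1) ≠ 0 := by positivity
  have hB : ((l + 1) * n).factorial ≠ 0 := Nat.factorial_ne_zero _
  rw [← Nat.factorization_le_iff_dvd hA hB, Finsupp.le_def]
  intro p
  rw [Nat.factorization_mul (pow_ne_zero _ (by omega)) (pow_ne_zero _ (Nat.factorial_ne_zero _)),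
    Nat.factorization_pow, Nat.factorization_pow]
  simp only [Finsupp.coe_add, Pi.add_apply, Finsupp.smul_apply, smul_eq_mul]
  by_cases hp : p.Prime
  · exact key_val hp l n hl hn
  · simp [Nat.factorization_eq_zero_of_not_prime _ hp]
end

section
/- If l is a prime number, then the multinomial Catalan number C_l(l−1) = ((l+1)(l−1))!/(l^l · ((l−1)!)^{l+1}) is not an integer. -/
/-!
By Legendre's formula the exponent of a prime `l` in `((l + 1)(l - 1))! = (l ^ 2 - 1)!` is
`⌊(l ^ 2 - 1) / l⌋ = l - 1`, so already `l ^ l` does not divide it.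
-/

open Nat

theorem Nat.Prime.pow_dvd_factorial_sq_sub_one_iff {p r : ℕ} (hp : p.Prime) :
    p ^ r ∣ (p ^ 2 - 1)! ↔ r ≤ p - 1 := by
  have hp2 : 2 ^ 2 ≤ p ^ 2 := Nat.pow_le_pow_left hp.two_le 2
  have hlog : Nat.log p (p ^ 2 - 1) < 2 := Nat.log_lt_of_lt_pow (by omega) (by omega)
  have hdiv : (p ^ 2 - 1) / p = p - 1 := by
    have hsplit : p ^ 2 - 1 = (p - 1) + p * (p - 1) := by
      obtain ⟨q, rfl⟩ := Nat.exists_eq_add_of_le' hp.one_le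
      simp only [Nat.add_sub_cancel]
      ring_nf
      omega
    rw [hsplit, Nat.add_mul_div_left _ _ hp.pos,
      Nat.div_eq_of_lt (Nat.sub_lt hp.pos one_pos), zero_add]
  rw [hp.pow_dvd_factorial_iff hlog, show Finset.Ico 1 2 = {1} from rfl,
    Finset.sum_singleton, pow_one, hdiv]

/-- If `l` is a prime number, then the multinomial Catalan number
`C_l(l−1) = ((l+1)(l−1))!/(l^l · ((l−1)!)^{l+1})` is not an integer. -/
theorem stmt9 (l : ℕ) (hl : l.Prime) :
    ¬ l ^ l * ((l - 1).factorial) ^ (l + 1) ∣ ((l + 1) * (l - 1)).factorial := by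
  intro h
  have hsq : (l + 1) * (l - 1) = l ^ 2 - 1 := by
    rw [← Nat.sq_sub_sq, one_pow]
  have hle : l ≤ l - 1 :=
    hl.pow_dvd_factorial_sq_sub_one_iff.1 (hsq ▸ (dvd_mul_right _ _).trans h)
  have := hl.pos
  omega
end

section
/- Let U = U(P,Q) be a regular Lucas sequence (U_0=0, U_1=1, U_{n+2}=P·U_{n+1}−Q·U_n with gcd(P,Q)=1 and U_n ≠ 0 for n ≥ 1). Then for all m, n ≥ 0, gcd(U_m, U_n) = |U_{gcd(m,n)}|. -/
/-!
The addition formula `U_{m+n+1} = U_{m+1} U_{n+1} - Q U_m U_n` together with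
`gcd(Q U_n, U_{n+1}) = 1` gives `gcd(U_{m+n+1}, U_{n+1}) = gcd(U_m, U_{n+1})`, so `n ↦ gcd(U_n, U_m)`
is periodic mod `m`, and the Euclidean algorithm on the indices runs in parallel with the one on the
values, exactly as for the Fibonacci numbers.
-/

/-- The Lucas sequence `U(P,Q)`: `U_0 = 0`, `U_1 = 1`, `U_{n+2} = P·U_{n+1} − Q·U_n`. -/
def lucasU (P Q : ℤ) : ℕ → ℤ
  | 0 => 0
  | 1 => 1
  | n + 2 => P * lucasU P Q (n + 1) - Q * lucasU P Q n

section

variable {P Q : ℤ}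

@[simp] lemma lucasU_zero : lucasU P Q 0 = 0 := rfl

@[simp] lemma lucasU_one : lucasU P Q 1 = 1 := rfl

lemma lucasU_add_two (n : ℕ) :
    lucasU P Q (n + 2) = P * lucasU P Q (n + 1) - Q * lucasU P Q n := rfl

lemma lucasU_add_add_one (m n : ℕ) :
    lucasU P Q (m + n + 1) =
      lucasU P Q (m + 1) * lucasU P Q (n + 1) - Q * lucasU P Q m * lucasU P Q n := by
  induction m using Nat.twoStepInduction with
  | zero => simp
  | one => rw [add_comm 1 n, lucasU_add_two, lucasU_add_two]; simp
  | more m ih₀ ih₁ =>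
    rw [show m + 2 + n + 1 = m + n + 1 + 2 by omega, lucasU_add_two,
      show m + n + 1 + 1 = m + 1 + n + 1 by omega, ih₀, ih₁, lucasU_add_two (m + 1),
      lucasU_add_two m]
    ring

lemma isCoprime_lucasU_add_one_right (hPQ : IsCoprime P Q) (n : ℕ) :
    IsCoprime Q (lucasU P Q (n + 1)) := by
  induction n with
  | zero => exact isCoprime_one_right
  | succ n ih =>
    rw [lucasU_add_two, sub_eq_add_neg, ← mul_neg, IsCoprime.add_mul_left_right_iff]
    exact hPQ.symm.mul_right ih

lemma isCoprime_lucasU_lucasU_add_one (hPQ : IsCoprime P Q) (n : ℕ) :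
    IsCoprime (lucasU P Q n) (lucasU P Q (n + 1)) := by
  induction n with
  | zero => exact isCoprime_one_right
  | succ n ih =>
    rw [lucasU_add_two, sub_eq_neg_add, mul_comm P, IsCoprime.add_mul_left_right_iff,
      IsCoprime.neg_right_iff]
    exact (isCoprime_lucasU_add_one_right hPQ n).symm.mul_right ih.symm

lemma gcd_lucasU_add_self (hPQ : IsCoprime P Q) (m n : ℕ) :
    Int.gcd (lucasU P Q (n + m)) (lucasU P Q m) = Int.gcd (lucasU P Q n) (lucasU P Q m) := by
  cases m with
  | zero => rfl
  | succ m =>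
    have hcop : Int.gcd (Q * lucasU P Q m) (lucasU P Q (m + 1)) = 1 :=
      Int.isCoprime_iff_gcd_eq_one.mp
        ((isCoprime_lucasU_add_one_right hPQ m).mul_left (isCoprime_lucasU_lucasU_add_one hPQ m))
    rw [← add_assoc, lucasU_add_add_one,
      show lucasU P Q (n + 1) * lucasU P Q (m + 1) - Q * lucasU P Q n * lucasU P Q m =
        -(Q * lucasU P Q m * lucasU P Q n) + lucasU P Q (m + 1) * lucasU P Q (n + 1) by ring,
      Int.gcd_add_mul_left_left, Int.neg_gcd, Int.gcd_mul_right_left_of_gcd_eq_one hcop]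

lemma gcd_lucasU_add_mul_self (hPQ : IsCoprime P Q) (m n k : ℕ) :
    Int.gcd (lucasU P Q (n + k * m)) (lucasU P Q m) = Int.gcd (lucasU P Q n) (lucasU P Q m) := by
  induction k with
  | zero => simp
  | succ k ih => rw [add_mul, one_mul, ← add_assoc, gcd_lucasU_add_self hPQ, ih]

theorem isStrongDvdSequence_natAbs_lucasU (hPQ : IsCoprime P Q) :
    Nat.IsStrongDvdSequence fun n ↦ (lucasU P Q n).natAbs := by
  intro m n
  induction m, n using Nat.gcd.induction with
  | H0 n => simp
  | H1 m n _ ih =>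
    rw [← Nat.gcd_rec m n] at ih
    rw [← ih, Nat.gcd_comm]
    conv_lhs => rw [← Nat.mod_add_div' n m]
    exact gcd_lucasU_add_mul_self hPQ m (n % m) (n / m)

end

theorem stmt13_general (P Q : ℤ) (hcop : IsCoprime P Q) :
    ∀ m n : ℕ, Int.gcd (lucasU P Q m) (lucasU P Q n) = (lucasU P Q (Nat.gcd m n)).natAbs :=
  isStrongDvdSequence_natAbs_lucasU hcop

/-- A regular Lucas sequence is a strong divisibility sequence:
`gcd(U_m, U_n) = |U_{gcd(m,n)}|`. -/
theorem stmt13 (P Q : ℤ) (hP : P ≠ 0) (hQ : Q ≠ 0) (hcop : IsCoprime P Q)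
    (hreg : ∀ n : ℕ, 1 ≤ n → lucasU P Q n ≠ 0) :
    ∀ m n : ℕ, Int.gcd (lucasU P Q m) (lucasU P Q n) = (lucasU P Q (Nat.gcd m n)).natAbs :=
  stmt13_general P Q hcop
end

section
/- For every Δ-regular Lucas sequence U(P,Q) and every n ≥ 1, the Lucasnomial Catalan number C_{U,1}(n) = (1/U_{n+1}) · (U_{2n}·U_{2n−1}···U_{n+1})/(U_n·U_{n−1}···U_1) is an integer. -/
/-- The generalized factorial `n!_U = U_n U_{n−1} ⋯ U_1`. -/
def lucasFact (P Q : ℤ) (n : ℕ) : ℤ := ∏ i ∈ Finset.range n, lucasU P Q (i + 1)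

theorem IsCoprime.dvd_of_dvd_mul_of_dvd_mul {R : Type*} [CommSemiring R] {x a b z : R}
    (hab : IsCoprime a b) (ha : x ∣ a * z) (hb : x ∣ b * z) : x ∣ z := by
  obtain ⟨u, v, huv⟩ := hab
  rw [← one_mul z, ← huv, add_mul, mul_assoc, mul_assoc]
  exact dvd_add (ha.mul_left u) (hb.mul_left v)

namespace LucasSequence

variable (P Q : ℤ)

theorem lucasU_add_add_one (m n : ℕ) :
    lucasU P Q (m + n + 1) =
      lucasU P Q (m + 1) * lucasU P Q (n + 1) - Q * lucasU P Q m * lucasU P Q n := by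
  induction m using Nat.twoStepInduction with
  | zero => simp [lucasU]
  | one => simp [lucasU, add_comm 1 n]
  | more m ih₀ ih₁ =>
    rw [show m + 2 + n + 1 = (m + n + 1) + 2 by omega, lucasU,
      show m + n + 1 + 1 = m + 1 + n + 1 by omega, ih₁, ih₀, lucasU]
    simp only [lucasU]
    ring

theorem lucasFact_succ (n : ℕ) :
    lucasFact P Q (n + 1) = lucasFact P Q n * lucasU P Q (n + 1) :=
  Finset.prod_range_succ _ _

theorem lucasFact_mul_lucasFact_dvd (a b : ℕ) :
    lucasFact P Q a * lucasFact P Q b ∣ lucasFact P Q (a + b) := by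
  match a, b with
  | 0, b => simp [lucasFact]
  | a + 1, 0 => simp [lucasFact]
  | a + 1, b + 1 =>
    have h₁ := lucasFact_mul_lucasFact_dvd a (b + 1)
    have h₂ := lucasFact_mul_lucasFact_dvd (a + 1) b
    have hsplit : lucasFact P Q (a + 1 + (b + 1)) =
        lucasFact P Q (a + (b + 1)) * lucasU P Q (a + 1) * lucasU P Q (b + 1 + 1) -
          lucasFact P Q (a + 1 + b) * lucasU P Q (b + 1) * (Q * lucasU P Q a) := by
      rw [show a + 1 + (b + 1) = a + (b + 1) + 1 by omega, lucasFact_succ,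
        lucasU_add_add_one, show a + (b + 1) = a + 1 + b by omega]
      ring
    have d₁ : lucasFact P Q (a + 1) * lucasFact P Q (b + 1) ∣
        lucasFact P Q (a + (b + 1)) * lucasU P Q (a + 1) := by
      rw [lucasFact_succ P Q a, mul_right_comm]
      exact mul_dvd_mul_right h₁ _
    have d₂ : lucasFact P Q (a + 1) * lucasFact P Q (b + 1) ∣
        lucasFact P Q (a + 1 + b) * lucasU P Q (b + 1) := by
      rw [lucasFact_succ P Q b, ← mul_assoc]
      exact mul_dvd_mul_right h₂ _
    rw [hsplit]
    exact dvd_sub (d₁.mul_right _) (d₂.mul_right _)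
termination_by a + b

variable {P Q}

theorem isCoprime_Q_lucasU_succ (hPQ : IsCoprime P Q) (n : ℕ) :
    IsCoprime Q (lucasU P Q (n + 1)) := by
  induction n with
  | zero => exact isCoprime_one_right
  | succ n ih =>
    rw [lucasU, sub_eq_add_neg, ← mul_neg]
    exact (hPQ.symm.mul_right ih).add_mul_left_right _

theorem isCoprime_lucasU_succ_lucasU (hPQ : IsCoprime P Q) (n : ℕ) :
    IsCoprime (lucasU P Q (n + 1)) (lucasU P Q n) := by
  induction n with
  | zero => exact isCoprime_one_left
  | succ n ih =>
    rw [lucasU, sub_eq_neg_add]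
    exact ((isCoprime_Q_lucasU_succ hPQ n).mul_left ih.symm).neg_left.add_mul_right_left _

theorem lucasU_succ_mul_lucasFact_sq_dvd (hPQ : IsCoprime P Q) (n : ℕ) :
    lucasU P Q (n + 1) * lucasFact P Q n ^ 2 ∣ lucasFact P Q (2 * n) := by
  cases n with
  | zero => simp [lucasFact, lucasU]
  | succ m =>
    have hcentral : lucasFact P Q (m + 1) ^ 2 ∣ lucasFact P Q (2 * (m + 1)) := by
      rw [sq, two_mul]
      exact lucasFact_mul_lucasFact_dvd P Q _ _
    have hshift : lucasU P Q (m + 1 + 1) * lucasFact P Q (m + 1) ^ 2 =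
        lucasU P Q (m + 1) * (lucasFact P Q (m + 2) * lucasFact P Q m) := by
      rw [lucasFact_succ P Q (m + 1), lucasFact_succ P Q m]
      ring
    refine (isCoprime_lucasU_succ_lucasU hPQ (m + 1)).dvd_of_dvd_mul_of_dvd_mul
      (mul_dvd_mul_left _ hcentral) ?_
    rw [hshift, show 2 * (m + 1) = m + 2 + m by omega]
    exact mul_dvd_mul_left _ (lucasFact_mul_lucasFact_dvd P Q _ _)

end LucasSequence

theorem stmt14_general (P Q : ℤ) (hcop : IsCoprime P Q) :
    ∀ n : ℕ, 1 ≤ n →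
      lucasU P Q (n + 1) * (lucasFact P Q n) ^ 2 ∣ lucasFact P Q (2 * n) :=
  fun n _ => LucasSequence.lucasU_succ_mul_lucasFact_sq_dvd hcop n

/-- For every Δ-regular Lucas sequence `U(P,Q)` and every `n ≥ 1`, the Lucasnomial Catalan
number `C_{U,1}(n) = (1/U_{n+1}) · (2n)!_U/(n!_U)²` is an integer. -/
theorem stmt14 (P Q : ℤ) (hP : P ≠ 0) (hQ : Q ≠ 0) (hcop : IsCoprime P Q)
    (hreg : ∀ n : ℕ, 1 ≤ n → lucasU P Q n ≠ 0) (hΔ : P ^ 2 - 4 * Q ≠ 0) :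
    ∀ n : ℕ, 1 ≤ n →
      lucasU P Q (n + 1) * (lucasFact P Q n) ^ 2 ∣ lucasFact P Q (2 * n) :=
  stmt14_general P Q hcop
end

section
/- Let U be a Δ-regular Lucas sequence and l ≥ 1. If p is a prime not dividing Q whose rank of appearance ρ_U(p) (least n ≥ 1 with p | U_n) satisfies ρ_U(p) > l, then v_p(C_{U,l}(n)) ≥ 0 for all n ≥ 1, where C_{U,l}(n) = (1/U_{n+1}^l) · ((l+1)n)!_U / (n!_U)^{l+1}. -/
/-!
For every integer `M`, strong divisibility makes `{n | M ∣ U_n}` the set of multiples of a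
single rank `r(M)`. Counting `v_p` layer by layer (`p^t ∣ U_i`) then gives the Legendre-type
formula `v_p(m!_U) = ∑_t ⌊m / r(p^t)⌋`, and `v_p(U_{n+1}) = #{t | r(p^t) ∣ n + 1}`.
For `t ≥ 1`, `r(p^t)` is `0` or at least `ρ > l`, and for such `r`
`l·[r ∣ n + 1] + (l + 1)⌊n / r⌋ ≤ ⌊(l + 1)n / r⌋`; summing over `t` gives the claim.
-/

open Classical in
/-- The rank of appearance `ρ_U(M)`, set to `0` when `M` divides no `U_n` with `n > 0`, so that
`M ∣ U_n ↔ lucasRank P Q M ∣ n` holds in all cases. -/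
noncomputable def lucasRank (P Q M : ℤ) : ℕ :=
  if h : ∃ n, 0 < n ∧ M ∣ lucasU P Q n then Nat.find h else 0

open Finset

namespace lucasU

variable {P Q : ℤ}

theorem add_succ (m n : ℕ) :
    lucasU P Q (m + n + 1) = lucasU P Q (m + 1) * lucasU P Q (n + 1)
      - Q * lucasU P Q m * lucasU P Q n := by
  induction n using Nat.twoStepInduction with
  | zero => simp [lucasU]
  | one => simp only [lucasU]; ring
  | more n ih₁ ih₂ =>
    rw [show m + (n + 2) + 1 = (m + n + 1) + 2 by ring, lucasU,
      show m + n + 1 + 1 = m + (n + 1) + 1 by ring, ih₂, ih₁]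
    simp only [lucasU]
    ring

theorem isCoprime_Q_succ (hcop : IsCoprime P Q) (n : ℕ) : IsCoprime Q (lucasU P Q (n + 1)) := by
  induction n with
  | zero => exact isCoprime_one_right
  | succ n ih =>
    rw [lucasU, sub_eq_add_neg, ← mul_neg, IsCoprime.add_mul_left_right_iff]
    exact hcop.symm.mul_right ih

theorem isCoprime_succ (hcop : IsCoprime P Q) (n : ℕ) :
    IsCoprime (lucasU P Q n) (lucasU P Q (n + 1)) := by
  induction n with
  | zero => exact isCoprime_one_right
  | succ n ih =>
    rw [lucasU, sub_eq_add_neg, IsCoprime.mul_add_right_right_iff]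
    exact ((isCoprime_Q_succ hcop n).symm.mul_right ih.symm).neg_right

theorem dvd_add_iff_of_dvd (hcop : IsCoprime P Q) {M : ℤ} {r : ℕ} (hr : M ∣ lucasU P Q r)
    (k : ℕ) :
    M ∣ lucasU P Q (k + r) ↔ M ∣ lucasU P Q k := by
  cases k with
  | zero => simpa [lucasU] using hr
  | succ k =>
    have hM : IsCoprime M (lucasU P Q (r + 1)) :=
      (isCoprime_succ hcop r).of_isCoprime_of_dvd_left hr
    rw [show k + 1 + r = k + r + 1 by ring, add_succ, dvd_sub_left (hr.mul_left _)]
    exact ⟨hM.dvd_of_dvd_mul_right, fun h => h.mul_right _⟩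

theorem dvd_iff_lucasRank_dvd (hcop : IsCoprime P Q) (M : ℤ) (n : ℕ) :
    M ∣ lucasU P Q n ↔ lucasRank P Q M ∣ n := by
  unfold lucasRank
  split_ifs with h
  · obtain ⟨hpos, hdvd⟩ := Nat.find_spec h
    have hper : ∀ q j, M ∣ lucasU P Q (j + Nat.find h * q) ↔ M ∣ lucasU P Q j := by
      intro q
      induction q with
      | zero => simp
      | succ q ih =>
        intro j
        rw [mul_add_one, ← add_assoc, dvd_add_iff_of_dvd hcop hdvd, ih]
    conv_lhs => rw [← Nat.mod_add_div n (Nat.find h), hper]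
    rw [Nat.dvd_iff_mod_eq_zero]
    refine ⟨fun hM => ?_, fun h0 => by simp [h0, lucasU]⟩
    by_contra hne
    exact Nat.find_min h (Nat.mod_lt n hpos) ⟨Nat.pos_of_ne_zero hne, hM⟩
  · push Not at h
    rw [zero_dvd_iff]
    refine ⟨fun hM => ?_, by rintro rfl; simp [lucasU]⟩
    by_contra hn
    exact h n (Nat.pos_of_ne_zero hn) hM

end lucasU

section padicValInt

variable {p : ℕ}

theorem padicValInt_pow [Fact p.Prime] (x : ℤ) (k : ℕ) :
    padicValInt p (x ^ k) = k * padicValInt p x := by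
  simp [padicValInt, Int.natAbs_pow]

theorem padicValInt_prod [Fact p.Prime] {ι : Type*} (s : Finset ι) {f : ι → ℤ}
    (hf : ∀ i ∈ s, f i ≠ 0) :
    padicValInt p (∏ i ∈ s, f i) = ∑ i ∈ s, padicValInt p (f i) := by
  induction s using Finset.cons_induction with
  | empty => simp
  | cons a s ha ih =>
    rw [prod_cons, sum_cons, padicValInt.mul (hf a (mem_cons_self a s))
      (prod_ne_zero_iff.mpr fun i hi => hf i (mem_cons_of_mem hi)),
      ih fun i hi => hf i (mem_cons_of_mem hi)]

theorem padicValInt_eq_card_pow_dvd (hp : p.Prime) {x : ℤ} (hx : x ≠ 0) {b : ℕ}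
    (hb : x.natAbs ≤ b) : padicValInt p x = #{t ∈ Ico 1 b | (p : ℤ) ^ t ∣ x} := by
  rw [padicValInt, ← Nat.factorization_def _ hp,
    Nat.factorization_eq_card_pow_dvd_of_lt hp (Int.natAbs_pos.mpr hx)
      (hb.trans_lt (Nat.lt_pow_self hp.one_lt))]
  simp only [← Int.natCast_dvd, Nat.cast_pow]

end padicValInt

section Legendre

variable {P Q : ℤ} {p : ℕ}

theorem lucasFact_ne_zero (hreg : ∀ n : ℕ, 1 ≤ n → lucasU P Q n ≠ 0) (m : ℕ) :
    lucasFact P Q m ≠ 0 :=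
  prod_ne_zero_iff.mpr fun i _ => hreg (i + 1) (by omega)

theorem padicValInt_lucasU (hcop : IsCoprime P Q) (hp : p.Prime) {n b : ℕ}
    (hn : lucasU P Q n ≠ 0) (hb : (lucasU P Q n).natAbs ≤ b) :
    padicValInt p (lucasU P Q n) = #{t ∈ Ico 1 b | lucasRank P Q ((p : ℤ) ^ t) ∣ n} := by
  simp only [padicValInt_eq_card_pow_dvd hp hn hb, lucasU.dvd_iff_lucasRank_dvd hcop]

theorem padicValInt_lucasFact (hcop : IsCoprime P Q)
    (hreg : ∀ n : ℕ, 1 ≤ n → lucasU P Q n ≠ 0) (hp : p.Prime) {m b : ℕ}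
    (hb : ∀ i ≤ m, (lucasU P Q i).natAbs ≤ b) :
    padicValInt p (lucasFact P Q m) = ∑ t ∈ Ico 1 b, m / lucasRank P Q ((p : ℤ) ^ t) := by
  have := Fact.mk hp
  rw [lucasFact, padicValInt_prod _ fun i _ => hreg (i + 1) (by omega),
    sum_congr rfl fun i hi => padicValInt_lucasU hcop hp (hreg (i + 1) (by omega))
      (hb (i + 1) (mem_range.mp hi))]
  exact (sum_card_bipartiteAbove_eq_sum_card_bipartiteBelow
    (r := fun i t => lucasRank P Q ((p : ℤ) ^ t) ∣ i + 1)).trans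
    (sum_congr rfl fun t _ => Nat.card_multiples m _)

end Legendre

theorem mul_ite_dvd_add_mul_div_le {l r n : ℕ} (hr : r = 0 ∨ l < r) :
    l * (if r ∣ n + 1 then 1 else 0) + (l + 1) * (n / r) ≤ (l + 1) * n / r := by
  rcases hr with rfl | hlr
  · simp
  split_ifs with hdvd
  · obtain ⟨c, rfl⟩ : ∃ c, n = r * c + (r - 1) := by
      obtain ⟨k, hk⟩ := hdvd
      exact ⟨k - 1, by cases k <;> simp_all [Nat.mul_succ]; omega⟩
    -- both sides are `(l + 1) c + l`; the right one only because `l + 1 ≤ r`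
    rw [Nat.mul_add_div (by omega), Nat.div_eq_of_lt (by omega), add_zero,
      Nat.le_div_iff_mul_le (by omega)]
    zify [show 1 ≤ r by omega]
    nlinarith
  · simpa using Nat.mul_div_le_mul_div_assoc (l + 1) n r

theorem stmt15_general (P Q : ℤ) (l : ℕ) (hcop : IsCoprime P Q)
    (hreg : ∀ n : ℕ, 1 ≤ n → lucasU P Q n ≠ 0) (p : ℕ) (hp : p.Prime)
    (ρ : ℕ) (hρmin : ∀ m : ℕ, 0 < m → (p : ℤ) ∣ lucasU P Q m → ρ ≤ m) (hρl : l < ρ) :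
    ∀ n : ℕ, 1 ≤ n →
      padicValInt p (lucasU P Q (n + 1) ^ l * (lucasFact P Q n) ^ (l + 1))
        ≤ padicValInt p (lucasFact P Q ((l + 1) * n)) := by
  intro n _
  have := Fact.mk hp
  have hsucc : n + 1 ≤ (l + 1) * n + 1 := by simpa using Nat.le_mul_of_pos_left n l.succ_pos
  set b := ∑ i ∈ range ((l + 1) * n + 2), (lucasU P Q i).natAbs
  have hb : ∀ i ≤ (l + 1) * n + 1, (lucasU P Q i).natAbs ≤ b := fun i hi =>
    single_le_sum (f := fun i => (lucasU P Q i).natAbs) (fun _ _ => Nat.zero_le _)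
      (mem_range.mpr (by omega))
  have hrank : ∀ t ∈ Ico 1 b,
      lucasRank P Q ((p : ℤ) ^ t) = 0 ∨ l < lucasRank P Q ((p : ℤ) ^ t) := by
    intro t ht
    refine (Nat.eq_zero_or_pos _).imp_right fun hpos => hρl.trans_le (hρmin _ hpos ?_)
    exact (dvd_pow_self _ (Nat.one_le_iff_ne_zero.mp (mem_Ico.mp ht).1)).trans
      ((lucasU.dvd_iff_lucasRank_dvd hcop _ _).mpr dvd_rfl)
  rw [padicValInt.mul (pow_ne_zero _ (hreg _ (by omega)))
      (pow_ne_zero _ (lucasFact_ne_zero hreg n)),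
    padicValInt_pow, padicValInt_pow, padicValInt_lucasU hcop hp (hreg _ (by omega)) (hb _ hsucc),
    padicValInt_lucasFact hcop hreg hp fun i hi => hb i (by omega),
    padicValInt_lucasFact hcop hreg hp fun i hi => hb i (by omega),
    card_filter, mul_sum, mul_sum, ← sum_add_distrib]
  exact sum_le_sum fun t ht => mul_ite_dvd_add_mul_div_le (hrank t ht)

/-- If `p ∤ Q` is a prime whose rank of appearance `ρ` in the Δ-regular Lucas sequence `U`
satisfies `ρ > l`, then `v_p(C_{U,l}(n)) ≥ 0` for all `n ≥ 1`, i.e. the `p`-adic valuation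
of the denominator `U_{n+1}^l · (n!_U)^{l+1}` is at most that of the numerator
`((l+1)n)!_U`. -/
theorem stmt15 (P Q : ℤ) (l : ℕ) (hl : 1 ≤ l) (hP : P ≠ 0) (hQ : Q ≠ 0)
    (hcop : IsCoprime P Q) (hreg : ∀ n : ℕ, 1 ≤ n → lucasU P Q n ≠ 0)
    (hΔ : P ^ 2 - 4 * Q ≠ 0) (p : ℕ) (hp : p.Prime) (hpQ : ¬ (p : ℤ) ∣ Q)
    (ρ : ℕ) (hρpos : 0 < ρ) (hρdvd : (p : ℤ) ∣ lucasU P Q ρ)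
    (hρmin : ∀ m : ℕ, 0 < m → (p : ℤ) ∣ lucasU P Q m → ρ ≤ m) (hρl : l < ρ) :
    ∀ n : ℕ, 1 ≤ n →
      padicValInt p (lucasU P Q (n + 1) ^ l * (lucasFact P Q n) ^ (l + 1))
        ≤ padicValInt p (lucasFact P Q ((l + 1) * n)) :=
  stmt15_general P Q l hcop hreg p hp ρ hρmin hρl
end
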